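/- Smoothing size bound: inserting smoothing terms of the form (x ∨ x̄) into a formula with m unique subformulas over n variables increases the number of unique subformulas by a factor of at most O(n); concretely, if every disjunction φ₁ ∨ φ₂ is replaced so that each branch is conjoined with at most n smoothing terms (one per missing variable), the resulting formula has at most m·(2n+1) + 2n unique subformulas. -/

import Mathlib

/-! Let `C` be the conjunction of the smoothing terms `x ∨ x̄` of all variables of `φ` and
conjoin both branches of every disjunction of `φ` with `C`. As `C` is a tautology the formula
keeps its meaning, and both sides of every disjunction now have the variables of `φ`. All copies
of `C` are one shared node of the DAG, so every subformula of the result is `ψ` or `C ∧ ψ` for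
the smoothed version `ψ` of a subformula of `φ`, or one of the at most `4 |vars φ| - 1`
subformulas of `C`: at most `2m + 4n - 1` in all. -/

/-- Negation normal form formulas over variables `V`. -/
inductive NNF (V : Type) : Type where
  | lit : V → Bool → NNF V
  | and : NNF V → NNF V → NNF V
  | or : NNF V → NNF V → NNF V
deriving DecidableEq

namespace NNF

variable {V : Type}

/-- The variables occurring in a formula. -/
def vars [DecidableEq V] : NNF V → Finset V
  | lit x _ => {x}
  | and f g => vars f ∪ vars g
  | or f g => vars f ∪ vars g

/-- Satisfaction by a total assignment. -/
def sat (α : V → Bool) : NNF V → Bool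
  | lit x b => α x == b
  | and f g => sat α f && sat α g
  | or f g => sat α f || sat α g

/-- Smoothness: every disjunction has equal variable sets. -/
def Smooth [DecidableEq V] : NNF V → Prop
  | lit _ _ => True
  | and f g => Smooth f ∧ Smooth g
  | or f g => vars f = vars g ∧ Smooth f ∧ Smooth g

/-- The set of (unique) subformulas of a formula. -/
def subfms [DecidableEq V] : NNF V → Finset (NNF V)
  | lit x b => {lit x b}
  | and f g => insert (and f g) (subfms f ∪ subfms g)
  | or f g => insert (or f g) (subfms f ∪ subfms g)

/-- Size of a formula represented as a DAG: the number of unique subformulas. -/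
def size [DecidableEq V] (φ : NNF V) : ℕ := (subfms φ).card

end NNF

namespace NNF

variable {V : Type}

def smoothingTerm (x : V) : NNF V := or (lit x true) (lit x false)

/-- Indexed by a nonempty list `x :: ys`, as `NNF` has no empty conjunction. -/
def smoothingConj (x : V) : List V → NNF V
  | [] => smoothingTerm x
  | y :: ys => and (smoothingTerm x) (smoothingConj y ys)

def smoothWith (C : NNF V) : NNF V → NNF V
  | lit x b => lit x b
  | and f g => and (smoothWith C f) (smoothWith C g)
  | or f g => or (and C (smoothWith C f)) (and C (smoothWith C g))

theorem sat_smoothingTerm (α : V → Bool) (x : V) : sat α (smoothingTerm x) = true := by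
  cases h : α x <;> simp [smoothingTerm, sat, h]

theorem sat_smoothingConj (α : V → Bool) (x : V) (ys : List V) :
    sat α (smoothingConj x ys) = true := by
  induction ys generalizing x with
  | nil => exact sat_smoothingTerm α x
  | cons y ys ih => simp [smoothingConj, sat, sat_smoothingTerm, ih]

theorem sat_smoothWith {C : NNF V} (hC : ∀ α, sat α C = true) (α : V → Bool) (f : NNF V) :
    sat α (smoothWith C f) = sat α f := by
  induction f with
  | lit => rfl
  | and f g ihf ihg => simp [smoothWith, sat, ihf, ihg]
  | or f g ihf ihg => simp [smoothWith, sat, hC α, ihf, ihg]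

section DecidableEq

variable [DecidableEq V]

theorem vars_nonempty (f : NNF V) : (vars f).Nonempty := by
  induction f with
  | lit x => exact Finset.singleton_nonempty x
  | and f g ihf | or f g ihf => exact ihf.mono Finset.subset_union_left

theorem vars_smoothingConj (x : V) (ys : List V) :
    vars (smoothingConj x ys) = (x :: ys).toFinset := by
  induction ys generalizing x with
  | nil => simp [smoothingConj, smoothingTerm, vars]
  | cons y ys ih => simp [smoothingConj, smoothingTerm, vars, ih, Finset.insert_comm]

theorem smooth_smoothingTerm (x : V) : Smooth (smoothingTerm x) :=
  ⟨rfl, trivial, trivial⟩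

theorem smooth_smoothingConj (x : V) (ys : List V) : Smooth (smoothingConj x ys) := by
  induction ys generalizing x with
  | nil => exact smooth_smoothingTerm x
  | cons y ys ih => exact ⟨smooth_smoothingTerm x, ih y⟩

theorem vars_subset_vars_smoothWith (C f : NNF V) : vars f ⊆ vars (smoothWith C f) := by
  induction f with
  | lit => exact subset_rfl
  | and f g ihf ihg => exact Finset.union_subset_union ihf ihg
  | or f g ihf ihg =>
    exact Finset.union_subset_union (ihf.trans Finset.subset_union_right)
      (ihg.trans Finset.subset_union_right)

theorem vars_smoothWith_subset (C f : NNF V) : vars (smoothWith C f) ⊆ vars f ∪ vars C := by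
  induction f with
  | lit => exact Finset.subset_union_left
  | and f g ihf ihg | or f g ihf ihg =>
    simp only [smoothWith, vars, Finset.subset_iff, Finset.mem_union] at ihf ihg ⊢
    grind

theorem smooth_smoothWith {C : NNF V} (hC : Smooth C) {f : NNF V} (hf : vars f ⊆ vars C) :
    Smooth (smoothWith C f) := by
  induction f with
  | lit => trivial
  | and f g ihf ihg =>
    rw [vars, Finset.union_subset_iff] at hf
    exact ⟨ihf hf.1, ihg hf.2⟩
  | or f g ihf ihg =>
    rw [vars, Finset.union_subset_iff] at hf
    have vars_and_C (h : NNF V) (hh : vars h ⊆ vars C) :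
        vars (and C (smoothWith C h)) = vars C :=
      Finset.union_eq_left.mpr
        ((vars_smoothWith_subset C h).trans (Finset.union_subset hh subset_rfl))
    exact ⟨by rw [vars_and_C f hf.1, vars_and_C g hf.2], ⟨hC, ihf hf.1⟩, hC, ihg hf.2⟩

theorem mem_subfms_self (f : NNF V) : f ∈ subfms f := by
  cases f <;> simp [subfms]

theorem card_subfms_and_le (f g : NNF V) :
    (subfms (and f g)).card ≤ (subfms f).card + (subfms g).card + 1 :=
  (Finset.card_insert_le _ _).trans (by grw [Finset.card_union_le])

theorem card_subfms_or_le (f g : NNF V) :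
    (subfms (or f g)).card ≤ (subfms f).card + (subfms g).card + 1 :=
  (Finset.card_insert_le _ _).trans (by grw [Finset.card_union_le])

theorem card_subfms_smoothingConj_le (x : V) (ys : List V) :
    (subfms (smoothingConj x ys)).card ≤ 4 * ys.length + 3 := by
  have hterm (z : V) : (subfms (smoothingTerm z)).card ≤ 3 :=
    (card_subfms_or_le (lit z true) (lit z false)).trans (by simp [subfms])
  induction ys generalizing x with
  | nil => exact hterm x
  | cons y ys ih =>
    have := card_subfms_and_le (smoothingTerm x) (smoothingConj y ys)
    simp only [smoothingConj, List.length_cons]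
    linarith [hterm x, ih y]

theorem subfms_smoothWith_subset (C f : NNF V) :
    subfms (smoothWith C f) ⊆
      (subfms f).image (smoothWith C) ∪ (subfms f).image (fun h => and C (smoothWith C h)) ∪
        subfms C := by
  induction f with
  | lit x b => simp [smoothWith, subfms]
  | and f g ihf ihg | or f g ihf ihg =>
    simp only [smoothWith, subfms, Finset.subset_iff, Finset.mem_union, Finset.mem_insert,
      Finset.mem_image] at ihf ihg ⊢
    grind [mem_subfms_self, smoothWith]

theorem size_smoothWith_le (C f : NNF V) :
    (smoothWith C f).size ≤ 2 * f.size + (subfms C).card := by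
  grw [size, subfms_smoothWith_subset, Finset.card_union_le, Finset.card_union_le,
    Finset.card_image_le, Finset.card_image_le, size]
  omega

end DecidableEq

end NNF

/-- Smoothing size bound: any formula with `m` unique subformulas over `n`
variables can be smoothed---conjoining each disjunction branch with smoothing
terms `(x ∨ x̄)` for its missing variables---into an equivalent smooth formula
with at most `m·(2n+1) + 2n` unique subformulas. -/
theorem smoothing_size_bound (V : Type) [Fintype V] [DecidableEq V]
    (φ : NNF V) :
    ∃ ψ : NNF V, ψ.Smooth ∧ (∀ α : V → Bool, ψ.sat α = φ.sat α) ∧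
      ψ.vars = φ.vars ∧
      ψ.size ≤ φ.size * (2 * Fintype.card V + 1) + 2 * Fintype.card V := by
  obtain ⟨x, ys, hxys⟩ := List.exists_cons_of_ne_nil φ.vars_nonempty.toList_ne_nil
  set C := NNF.smoothingConj x ys
  have hvC : C.vars = φ.vars := by rw [NNF.vars_smoothingConj, ← hxys, Finset.toList_toFinset]
  have hlen : ys.length + 1 ≤ Fintype.card V := by
    rw [← List.length_cons, ← hxys, Finset.length_toList]
    exact Finset.card_le_univ φ.vars
  have hm : 1 ≤ φ.size := Finset.card_pos.mpr ⟨φ, NNF.mem_subfms_self φ⟩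
  refine ⟨NNF.smoothWith C φ, NNF.smooth_smoothWith (NNF.smooth_smoothingConj x ys) hvC.ge,
    fun α => NNF.sat_smoothWith (fun β => NNF.sat_smoothingConj β x ys) α φ, ?_, ?_⟩
  · refine (NNF.vars_smoothWith_subset C φ).trans ?_ |>.antisymm
      (NNF.vars_subset_vars_smoothWith C φ)
    rw [hvC, Finset.union_self]
  · calc (NNF.smoothWith C φ).size ≤ 2 * φ.size + (4 * ys.length + 3) :=
          (NNF.size_smoothWith_le C φ).trans (by grw [NNF.card_subfms_smoothingConj_le])
      _ ≤ φ.size * (2 * Fintype.card V + 1) + 2 * Fintype.card V := by nlinarith
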